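/- Let G be any graph on n vertices with γ(G) = 2, and let π be any permutation of V(G). Then γ_{(n+γ(G))/(2n)}(πG) = 2; that is, the p-domination number of the prism with p = (n+2)/(2n) equals 2. -/

import Mathlib

/-!
A dominating pair `D` of `G`, placed in the first copy, dominates all of that copy together with
its two matching partners `π '' D` in the second, i.e. `n + 2` of the `2n` vertices of the prism.
A single vertex of the prism dominates its closed neighbourhood in its own copy, which misses a
vertex since `γ(G) > 1`, plus one matching partner: at most `n` vertices.
-/

open SimpleGraph

/-- Closed neighborhood of a set of vertices. -/
def closedNbhd {V : Type*} (G : SimpleGraph V) (S : Set V) : Set V :=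
  {v | v ∈ S ∨ ∃ u ∈ S, G.Adj u v}

/-- `S` is a `p`-dominating set of `G`. -/
def IsPDomSet {V : Type*} [Fintype V] (G : SimpleGraph V) (p : ℝ) (S : Set V) : Prop :=
  p ≤ (closedNbhd G S).ncard / (Fintype.card V : ℝ)

/-- The `p`-domination number of `G`. -/
noncomputable def pDomNum {V : Type*} [Fintype V] (G : SimpleGraph V) (p : ℝ) : ℕ :=
  sInf {k | ∃ S : Set V, IsPDomSet G p S ∧ S.ncard = k}

/-- `S` is a dominating set of `G`. -/
def IsDomSet {V : Type*} (G : SimpleGraph V) (S : Set V) : Prop :=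
  ∀ v, v ∈ closedNbhd G S

/-- The domination number of `G`. -/
noncomputable def domNum {V : Type*} (G : SimpleGraph V) : ℕ :=
  sInf {k | ∃ S : Set V, IsDomSet G S ∧ S.ncard = k}

/-- The prism of `G` with respect to a permutation `π`. -/
def prism {V : Type*} (G : SimpleGraph V) (π : Equiv.Perm V) : SimpleGraph (V ⊕ V) where
  Adj x y := match x, y with
    | .inl a, .inl b => G.Adj a b
    | .inr a, .inr b => G.Adj a b
    | .inl a, .inr b => π a = b
    | .inr a, .inl b => π b = a
  symm := ⟨by rintro (a|a) (b|b) h <;> simp_all [SimpleGraph.adj_comm]⟩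
  loopless := ⟨by rintro (a|a) h <;> simp_all⟩

section

variable {V : Type*}

section Domination

variable (G : SimpleGraph V)

@[simp]
theorem closedNbhd_empty : closedNbhd G ∅ = ∅ := by
  ext v; simp [closedNbhd]

theorem ncard_closedNbhd_singleton_lt [Fintype V] {a : V} (ha : ¬ IsDomSet G {a}) :
    (closedNbhd G {a}).ncard < Fintype.card V := by
  rw [← Nat.card_eq_fintype_card, ← Set.ncard_univ]
  exact Set.ncard_lt_ncard (Set.ssubset_univ_iff.mpr fun h => ha fun v => by simp [h])

variable {G}

theorem domNum_le {S : Set V} (hS : IsDomSet G S) : domNum G ≤ S.ncard :=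
  Nat.sInf_le ⟨S, hS, rfl⟩

theorem exists_isDomSet_ncard_eq_domNum : ∃ S : Set V, IsDomSet G S ∧ S.ncard = domNum G :=
  Nat.sInf_mem (s := {k | ∃ S : Set V, IsDomSet G S ∧ S.ncard = k})
    ⟨_, Set.univ, fun v => Or.inl (Set.mem_univ v), rfl⟩

theorem pDomNum_le [Fintype V] {p : ℝ} {S : Set V} (hS : IsPDomSet G p S) :
    pDomNum G p ≤ S.ncard :=
  Nat.sInf_le ⟨S, hS, rfl⟩

theorem le_pDomNum [Fintype V] {p : ℝ} {k : ℕ} (hne : ∃ S, IsPDomSet G p S)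
    (h : ∀ S, IsPDomSet G p S → k ≤ S.ncard) : k ≤ pDomNum G p := by
  obtain ⟨S, hS⟩ := hne
  exact le_csInf ⟨_, S, hS, rfl⟩ fun _ ⟨T, hT, hk⟩ => hk ▸ h T hT

theorem isPDomSet_div_card_iff [Fintype V] [Nonempty V] {k : ℝ} {S : Set V} :
    IsPDomSet G (k / Fintype.card V) S ↔ k ≤ (closedNbhd G S).ncard :=
  div_le_div_iff_of_pos_right (by exact_mod_cast Fintype.card_pos)

end Domination

section Prism

variable {G : SimpleGraph V} {π : Equiv.Perm V} {a b : V}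

@[simp] theorem prism_adj_inl_inl : (prism G π).Adj (.inl a) (.inl b) ↔ G.Adj a b := Iff.rfl
@[simp] theorem prism_adj_inr_inr : (prism G π).Adj (.inr a) (.inr b) ↔ G.Adj a b := Iff.rfl
@[simp] theorem prism_adj_inl_inr : (prism G π).Adj (.inl a) (.inr b) ↔ π a = b := Iff.rfl
@[simp] theorem prism_adj_inr_inl : (prism G π).Adj (.inr a) (.inl b) ↔ π b = a := Iff.rfl

theorem closedNbhd_prism_inl :
    closedNbhd (prism G π) {.inl a} = insert (.inr (π a)) (Sum.inl '' closedNbhd G {a}) := by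
  ext (b | b) <;> simp [closedNbhd, eq_comm]

theorem closedNbhd_prism_inr :
    closedNbhd (prism G π) {.inr a} = insert (.inl (π.symm a)) (Sum.inr '' closedNbhd G {a}) := by
  ext (b | b) <;> simp [closedNbhd, Equiv.eq_symm_apply, eq_comm]

theorem ncard_closedNbhd_prism_singleton_le [Fintype V] (hG : ∀ a, ¬ IsDomSet G {a})
    (x : V ⊕ V) : (closedNbhd (prism G π) {x}).ncard ≤ Fintype.card V := by
  rcases x with a | a
  · rw [closedNbhd_prism_inl]
    refine (Set.ncard_insert_le _ _).trans ?_
    rw [Set.ncard_image_of_injective _ Sum.inl_injective]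
    exact ncard_closedNbhd_singleton_lt G (hG a)
  · rw [closedNbhd_prism_inr]
    refine (Set.ncard_insert_le _ _).trans ?_
    rw [Set.ncard_image_of_injective _ Sum.inr_injective]
    exact ncard_closedNbhd_singleton_lt G (hG a)

theorem ncard_closedNbhd_prism_le [Fintype V] (hG : ∀ a, ¬ IsDomSet G {a}) {S : Set (V ⊕ V)}
    (hS : S.ncard ≤ 1) : (closedNbhd (prism G π) S).ncard ≤ Fintype.card V := by
  rcases (Set.ncard_le_one_iff_eq (Set.toFinite S)).1 hS with rfl | ⟨x, rfl⟩
  · simp only [closedNbhd_empty, Set.ncard_empty, Nat.zero_le]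
  · exact ncard_closedNbhd_prism_singleton_le hG x

theorem range_inl_union_subset_closedNbhd_prism {D : Set V} (hD : IsDomSet G D) :
    Set.range Sum.inl ∪ (Sum.inr ∘ π) '' D ⊆ closedNbhd (prism G π) (Sum.inl '' D) := by
  rintro (b | b) hb
  · rcases hD b with hb | ⟨u, hu, hub⟩
    · exact Or.inl ⟨b, hb, rfl⟩
    · exact Or.inr ⟨.inl u, ⟨u, hu, rfl⟩, hub⟩
  · obtain ⟨u, hu, rfl⟩ : ∃ u ∈ D, π u = b := by simpa using hb
    exact Or.inr ⟨.inl u, ⟨u, hu, rfl⟩, rfl⟩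

theorem card_add_ncard_le_ncard_closedNbhd_prism [Fintype V] {D : Set V} (hD : IsDomSet G D) :
    Fintype.card V + D.ncard ≤ (closedNbhd (prism G π) (Sum.inl '' D)).ncard := by
  have hdisj : Disjoint (Set.range (Sum.inl : V → V ⊕ V)) ((Sum.inr ∘ π) '' D) := by
    simp [Set.disjoint_left]
  calc Fintype.card V + D.ncard
      = (Set.range Sum.inl ∪ (Sum.inr ∘ π) '' D).ncard := by
        rw [Set.ncard_union_eq hdisj, Set.ncard_range_of_injective Sum.inl_injective,
          Set.ncard_image_of_injective _ (Sum.inr_injective.comp π.injective),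
          Nat.card_eq_fintype_card]
    _ ≤ _ := Set.ncard_le_ncard (range_inl_union_subset_closedNbhd_prism hD)

end Prism

end

theorem stmt8 {V : Type*} [Fintype V] (G : SimpleGraph V) (n : ℕ)
    (hn : Fintype.card V = n)
    (hγ : domNum G = 2)
    (π : Equiv.Perm V) :
    pDomNum (prism G π) (((n : ℝ) + domNum G) / (2 * n)) = 2 := by
  obtain ⟨D, hD, hD2⟩ := exists_isDomSet_ncard_eq_domNum (G := G)
  rw [hγ] at hD2
  have hG : ∀ a, ¬ IsDomSet G {a} := fun a ha => by
    simpa [hγ] using domNum_le ha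
  obtain ⟨u, -⟩ := Set.nonempty_of_ncard_ne_zero (s := D) (by omega)
  have : Nonempty V := ⟨u⟩
  have hp : ((n : ℝ) + domNum G) / (2 * n) = ((n + 2 : ℕ) : ℝ) / Fintype.card (V ⊕ V) := by
    rw [hγ, Fintype.card_sum, hn]; push_cast; ring
  have hPDom : ∀ S, IsPDomSet (prism G π) (((n + 2 : ℕ) : ℝ) / Fintype.card (V ⊕ V)) S ↔
      n + 2 ≤ (closedNbhd (prism G π) S).ncard := fun S =>
    isPDomSet_div_card_iff.trans Nat.cast_le
  have hInlD : IsPDomSet (prism G π) _ (Sum.inl '' D) :=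
    (hPDom _).2 (hn ▸ hD2 ▸ card_add_ncard_le_ncard_closedNbhd_prism hD)
  rw [hp]
  refine le_antisymm ?_ (le_pDomNum ⟨_, hInlD⟩ fun S hS => ?_)
  · simpa [Set.ncard_image_of_injective _ Sum.inl_injective, hD2] using pDomNum_le hInlD
  · by_contra! hS2
    have := ncard_closedNbhd_prism_le (π := π) hG (Nat.lt_succ_iff.1 hS2)
    have := (hPDom S).1 hS
    omega
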